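/- arXiv:1907.03648 — 5 statements merged into one kernel-verified Lean document; each statement's English description precedes it below -/
import Mathlib

section
/- A commutative monoid M is separative (i.e., a+a=a+b=b+b implies a=b for all a,b in M) if and only if it satisfies cancellation of small elements: whenever a+c=b+c and c ≤ n·a and c ≤ m·b for some positive integers n, m, then a = b. Here x ≤ y means there exists z with x+z = y. -/
private lemma sep_aux {M : Type*} [AddCommMonoid M]
    (hsep : ∀ a b : M, a + a = a + b → a + b = b + b → a = b)
    (a b : M) : ∀ k : ℕ, (k + 2) • a = (k + 1) • a + b → a + a = a + b := by
  intro k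
  induction k with
  | zero =>
    intro h
    simpa [two_nsmul, one_nsmul] using h
  | succ k ih =>
    intro h
    have e1 : k + 1 + 2 = k + 3 := by omega
    have e2 : k + 1 + 1 = k + 2 := by omega
    rw [e1, e2] at h
    -- h : (k + 3) • a = (k + 2) • a + b
    apply ih
    -- goal : (k + 2) • a = (k + 1) • a + b
    apply hsep
    · calc (k + 2) • a + (k + 2) • a
          = (k + 2 + (k + 2)) • a := (add_nsmul a _ _).symm
        _ = (k + 1 + (k + 3)) • a := by congr 1; omega
        _ = (k + 1) • a + (k + 3) • a := add_nsmul a _ _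
        _ = (k + 1) • a + ((k + 2) • a + b) := by rw [h]
        _ = (k + 2) • a + ((k + 1) • a + b) := add_left_comm _ _ _
    · calc (k + 2) • a + ((k + 1) • a + b)
          = (k + 2 + (k + 1)) • a + b := by rw [add_nsmul a (k+2) (k+1), add_assoc]
        _ = (k + (k + 3)) • a + b := by congr 2; omega
        _ = k • a + (k + 3) • a + b := by rw [add_nsmul]
        _ = k • a + ((k + 2) • a + b) + b := by rw [h]
        _ = (k + (k + 2)) • a + (b + b) := by rw [add_nsmul a k (k+2)]; abel
        _ = (k + 1 + (k + 1)) • a + (b + b) := by congr 2; omega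
        _ = ((k + 1) • a + (k + 1) • a) + (b + b) := by rw [add_nsmul]
        _ = ((k + 1) • a + b) + ((k + 1) • a + b) := by abel

/-- A commutative monoid is separative iff it satisfies cancellation of small elements. -/
theorem stmt_0 (M : Type*) [AddCommMonoid M] :
    (∀ a b : M, a + a = a + b → a + b = b + b → a = b) ↔
    (∀ a b c : M, a + c = b + c →
      (∃ n : ℕ, 0 < n ∧ ∃ z : M, c + z = n • a) →
      (∃ m : ℕ, 0 < m ∧ ∃ z : M, c + z = m • b) → a = b) := by
  constructor
  · intro hsep a b c habc hn hm
    obtain ⟨n, hn0, z, hz⟩ := hn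
    obtain ⟨m, hm0, w, hw⟩ := hm
    have h1 : (n + 1) • a = n • a + b := by
      calc (n + 1) • a = n • a + a := by rw [succ_nsmul]
        _ = (c + z) + a := by rw [hz]
        _ = (a + c) + z := by abel
        _ = (b + c) + z := by rw [habc]
        _ = (c + z) + b := by abel
        _ = n • a + b := by rw [hz]
    have h2 : (m + 1) • b = m • b + a := by
      calc (m + 1) • b = m • b + b := by rw [succ_nsmul]
        _ = (c + w) + b := by rw [hw]
        _ = (b + c) + w := by abel
        _ = (a + c) + w := by rw [habc]
        _ = (c + w) + a := by abel
        _ = m • b + a := by rw [hw]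
    obtain ⟨k, rfl⟩ : ∃ k, n = k + 1 := ⟨n - 1, by omega⟩
    obtain ⟨l, rfl⟩ : ∃ l, m = l + 1 := ⟨m - 1, by omega⟩
    have ek : k + 1 + 1 = k + 2 := by omega
    have el : l + 1 + 1 = l + 2 := by omega
    rw [ek] at h1
    rw [el] at h2
    have ha : a + a = a + b := sep_aux hsep a b k h1
    have hb : b + b = b + a := sep_aux hsep b a l h2
    exact hsep a b ha (by rw [add_comm a b, ← hb])
  · intro h a b h1 h2
    refine h a b a ?_ ⟨1, one_pos, 0, by simp⟩ ⟨2, two_pos, b, ?_⟩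
    · rw [h1, add_comm]
    · rw [two_nsmul]; exact h2
end

section
/- In a separative commutative monoid, every element is either free or regular: for each x, either 2x ≤ x, or for all positive integers n, m, n·x ≤ m·x implies n ≤ m. -/
/-- In a separative commutative monoid, every element is either regular (2x ≤ x)
or free (n•x ≤ m•x implies n ≤ m for positive n, m), with respect to the algebraic
pre-order x ≤ y iff ∃ z, x + z = y. -/
theorem stmt_1 (M : Type*) [AddCommMonoid M]
    (hsep : ∀ a b : M, a + a = a + b → a + b = b + b → a = b) (x : M) :
    (∃ z : M, 2 • x + z = x) ∨
    (∀ n m : ℕ, 0 < n → 0 < m → (∃ z : M, n • x + z = m • x) → n ≤ m) := by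
  by_cases hfree : ∀ n m : ℕ, 0 < n → 0 < m → (∃ z : M, n • x + z = m • x) → n ≤ m
  · exact Or.inr hfree
  push_neg at hfree
  obtain ⟨n, m, hn, hm, ⟨z, hz⟩, hlt⟩ := hfree
  left
  -- separative cancellation in the case c ≤ a, c ≤ b
  have sep1 : ∀ a b c : M, a + c = b + c → (∃ d, c + d = a) → (∃ e, c + e = b) → a = b := by
    rintro a b c h ⟨d, hd⟩ ⟨e, he⟩
    apply hsep
    · calc a + a = a + c + d := by rw [add_assoc, hd]
        _ = b + c + d := by rw [h]
        _ = a + b := by rw [add_assoc, hd, add_comm]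
    · calc a + b = a + c + e := by rw [add_assoc, he]
        _ = b + c + e := by rw [h]
        _ = b + b := by rw [add_assoc, he]
  -- write n = m + 1 + (k-1)
  obtain ⟨k, rfl⟩ : ∃ k, n = m + 1 + k := ⟨n - (m + 1), by omega⟩
  set u : M := k • x + z with hu
  set v : M := x + u with hv
  have hmv : m • x + v = m • x := by
    have : (m + 1 + k) • x = m • x + (x + k • x) := by
      simp [add_nsmul, one_nsmul, add_assoc]
    rw [this] at hz
    calc m • x + v = m • x + (x + k • x) + z := by
          rw [hv, hu]; simp only [add_assoc]
      _ = m • x := hz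
  have key : ∀ j : ℕ, (j + 1) • x + v = (j + 1) • x → x + v = x := by
    intro j
    induction j with
    | zero => intro h; simpa using h
    | succ j ih =>
      intro h
      apply ih
      apply sep1 ((j + 1) • x + v) ((j + 1) • x) x
      · have hs : (j + 1 + 1) • x = (j + 1) • x + x := succ_nsmul x (j + 1)
        rw [add_right_comm, ← hs]
        exact h
      · exact ⟨j • x + v, by rw [← add_assoc, add_comm x (j • x), ← succ_nsmul]⟩
      · exact ⟨j • x, by rw [add_comm, ← succ_nsmul]⟩
  obtain ⟨m', rfl⟩ : ∃ m', m = m' + 1 := ⟨m - 1, by omega⟩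
  have hxv : x + v = x := key m' hmv
  exact ⟨u, by rw [two_nsmul, add_assoc, ← hv]; exact hxv⟩
end

section
/- Let M₁, M₂ be commutative monoids with surjective homomorphisms ρᵢ : Mᵢ → N whose 'kernels' are order-ideals Iᵢ (i.e., Mᵢ/Iᵢ ≅ N via ρᵢ), let M be a refinement monoid with order-ideals J₁, J₂ satisfying J₁ ∩ J₂ = {0}, and suppose θᵢ : M → Mᵢ are surjective homomorphisms with ρ₁∘θ₁ = ρ₂∘θ₂, such that θᵢ is the quotient of M by J_{3−i} and θᵢ restricts to the identity on Jᵢ. Then the map θ : M → P = {(x₁,x₂) : ρ₁(x₁) = ρ₂(x₂)} given by θ(x) = (θ₁(x), θ₂(x)) is surjective. -/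
/-- Let `M` be a refinement monoid with order-ideals `J₁, J₂`, `J₁ ∩ J₂ = {0}`,
`θᵢ : M → Mᵢ` surjective homomorphisms realizing the quotients of `M` by `J_{3−i}`
and restricting injectively (i.e. as the identity) to `Jᵢ`, and `ρᵢ : Mᵢ → N`
surjective homomorphisms with `ρ₁∘θ₁ = ρ₂∘θ₂` realizing the quotients of `Mᵢ` by the
order-ideals `Iᵢ = θᵢ(Jᵢ)`.  Then `θ = (θ₁, θ₂) : M → P` to the pullback
`P = {(x₁,x₂) : ρ₁ x₁ = ρ₂ x₂}` is surjective. -/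
theorem stmt_10 {M M₁ M₂ N : Type*} [AddCommMonoid M] [AddCommMonoid M₁]
    [AddCommMonoid M₂] [AddCommMonoid N]
    (href : ∀ a b c d : M, a + b = c + d →
      ∃ x y z t : M, a = x + y ∧ b = z + t ∧ c = x + z ∧ d = y + t)
    (J₁ J₂ : AddSubmonoid M)
    (hJ₁ : ∀ x y : M, x + y ∈ J₁ → x ∈ J₁ ∧ y ∈ J₁)
    (hJ₂ : ∀ x y : M, x + y ∈ J₂ → x ∈ J₂ ∧ y ∈ J₂)
    (hdisj : ∀ a : M, a ∈ J₁ → a ∈ J₂ → a = 0)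
    (θ₁ : M →+ M₁) (θ₂ : M →+ M₂) (ρ₁ : M₁ →+ N) (ρ₂ : M₂ →+ N)
    (hθ₁s : Function.Surjective θ₁) (hθ₂s : Function.Surjective θ₂)
    (hρ₁s : Function.Surjective ρ₁) (hρ₂s : Function.Surjective ρ₂)
    (hcomm : ∀ x : M, ρ₁ (θ₁ x) = ρ₂ (θ₂ x))
    (hθ₁ : ∀ a b : M, θ₁ a = θ₁ b ↔ ∃ u ∈ J₂, ∃ v ∈ J₂, a + u = b + v)
    (hθ₂ : ∀ a b : M, θ₂ a = θ₂ b ↔ ∃ u ∈ J₁, ∃ v ∈ J₁, a + u = b + v)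
    (hρ₁ : ∀ a b : M₁, ρ₁ a = ρ₁ b ↔
      ∃ u ∈ J₁.map θ₁, ∃ v ∈ J₁.map θ₁, a + u = b + v)
    (hρ₂ : ∀ a b : M₂, ρ₂ a = ρ₂ b ↔
      ∃ u ∈ J₂.map θ₂, ∃ v ∈ J₂.map θ₂, a + u = b + v)
    (hid₁ : ∀ a ∈ J₁, ∀ b ∈ J₁, θ₁ a = θ₁ b → a = b)
    (hid₂ : ∀ a ∈ J₂, ∀ b ∈ J₂, θ₂ a = θ₂ b → a = b) :
    ∀ (x₁ : M₁) (x₂ : M₂), ρ₁ x₁ = ρ₂ x₂ → ∃ x : M, θ₁ x = x₁ ∧ θ₂ x = x₂ := by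
  intro x₁ x₂ h
  -- θ₁ kills J₂, θ₂ kills J₁
  have k1 : ∀ w ∈ J₂, θ₁ w = 0 := by
    intro w hw
    have : θ₁ w = θ₁ 0 := (hθ₁ w 0).mpr ⟨0, J₂.zero_mem, w, hw, by abel⟩
    simpa using this
  have k2 : ∀ w ∈ J₁, θ₂ w = 0 := by
    intro w hw
    have : θ₂ w = θ₂ 0 := (hθ₂ w 0).mpr ⟨0, J₁.zero_mem, w, hw, by abel⟩
    simpa using this
  obtain ⟨a, ha⟩ := hθ₁s x₁
  obtain ⟨b, hb⟩ := hθ₂s x₂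
  have hρeq : ρ₂ (θ₂ a) = ρ₂ (θ₂ b) := by rw [← hcomm a, ha, h, hb]
  obtain ⟨u, ⟨j, hj, hju⟩, v, ⟨k, hk, hkv⟩, heq⟩ := (hρ₂ (θ₂ a) (θ₂ b)).mp hρeq
  have h2 : θ₂ (a + j) = θ₂ (b + k) := by
    rw [map_add, map_add, hju, hkv]; exact heq
  obtain ⟨p, hp, q, hq, heq2⟩ := (hθ₂ (a + j) (b + k)).mp h2
  -- refinement: a + (j + p) = b + (k + q)
  obtain ⟨x, y, z, t, hax, hjp, hbx, hkq⟩ :=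
    href a (j + p) b (k + q) (by rw [← add_assoc, ← add_assoc]; exact heq2)
  -- refine z + t = j + p
  obtain ⟨α, β, γ, δ, hz, ht, hjdec, hpdec⟩ := href z t j p hjp.symm
  have hα : α ∈ J₂ := (hJ₂ α γ (hjdec ▸ hj)).1
  have hβ : β ∈ J₁ := (hJ₁ β δ (hpdec ▸ hp)).1
  -- refine y + t = k + q
  obtain ⟨y₁, y₂, s₁, s₂, hy, ht', hkdec, hqdec⟩ := href y t k q hkq.symm
  have hy₁ : y₁ ∈ J₂ := (hJ₂ y₁ s₁ (hkdec ▸ hk)).1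
  have hy₂ : y₂ ∈ J₁ := (hJ₁ y₂ s₂ (hqdec ▸ hq)).1
  refine ⟨x + y₂ + α, ?_, ?_⟩
  · have : θ₁ (x + y₂ + α) = θ₁ (x + (y₁ + y₂)) := by
      simp [map_add, k1 α hα, k1 y₁ hy₁]
    rw [this, ← hy, ← hax, ha]
  · have : θ₂ (x + y₂ + α) = θ₂ (x + (α + β)) := by
      simp [map_add, k2 y₂ hy₂, k2 β hβ]
    rw [this, ← hz, ← hbx, hb]
end

section
/- Let M be a separative commutative monoid and let x ∈ M satisfy not(2x ≤ x). Then for all n, m ∈ ℕ with n ≥ 1 and m ≥ 1, n·x ≤ m·x implies n ≤ m. -/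
/-- In a separative commutative monoid, an element which is not regular is free:
if `¬(2x ≤ x)` then `n•x ≤ m•x` implies `n ≤ m` for all positive integers `n, m`
(with `a ≤ b` the algebraic pre-order `∃ z, a + z = b`). -/
theorem stmt_16 {M : Type*} [AddCommMonoid M]
    (hsep : ∀ a b : M, a + a = a + b → a + b = b + b → a = b)
    (x : M) (hx : ¬ ∃ z : M, 2 • x + z = x) :
    ∀ n m : ℕ, 1 ≤ n → 1 ≤ m → (∃ z : M, n • x + z = m • x) → n ≤ m := by
  -- cancellation sub-lemma: if x + p = x + q with x ≤ p and x ≤ q then p = q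
  have cancel : ∀ p q : M, (∃ u, x + u = p) → (∃ v, x + v = q) → x + p = x + q → p = q := by
    rintro p q ⟨u, hu⟩ ⟨v, hv⟩ h
    apply hsep
    · calc p + p = p + (x + u) := by rw [hu]
        _ = (x + p) + u := by abel
        _ = (x + q) + u := by rw [h]
        _ = (x + u) + q := by abel
        _ = p + q := by rw [hu]
    · refine Eq.symm ?_
      calc q + q = q + (x + v) := by rw [hv]
        _ = (x + q) + v := by abel
        _ = (x + p) + v := by rw [h]
        _ = (x + v) + p := by abel
        _ = q + p := by rw [hv]
        _ = p + q := by abel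
  -- key claim: if k•x + A = (k+1)•x and x ≤ A then A = x
  have key : ∀ (k : ℕ) (A : M), (∃ u, x + u = A) → k • x + A = (k + 1) • x → A = x := by
    intro k
    induction k with
    | zero => intro A _ h; simpa using h
    | succ k ih =>
        intro A hA h
        apply ih A hA
        apply cancel (k • x + A) ((k + 1) • x)
        · obtain ⟨u, hu⟩ := hA
          exact ⟨u + k • x, by rw [← hu]; abel⟩
        · exact ⟨k • x, by rw [succ_nsmul x k]; abel⟩
        · calc x + (k • x + A) = (k + 1) • x + A := by rw [succ_nsmul x k]; abel
            _ = (k + 1 + 1) • x := h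
            _ = x + (k + 1) • x := by rw [succ_nsmul x (k + 1)]; abel
  rintro n m hn hm ⟨z, hz⟩
  by_contra hnm
  push_neg at hnm
  obtain ⟨k, rfl⟩ : ∃ k, m = k + 1 := ⟨m - 1, by omega⟩
  obtain ⟨d, rfl⟩ : ∃ d, n = k + (d + 2) := ⟨n - k - 2, by omega⟩
  have hA : k • x + ((d + 2) • x + z) = (k + 1) • x := by
    rw [← hz, add_nsmul x k (d + 2)]; abel
  have hAx : (d + 2) • x + z = x := by
    apply key k _ _ hA
    refine ⟨(d + 1) • x + z, ?_⟩
    have e2 : (d + 2) • x = (d + 1) • x + x := succ_nsmul x (d + 1)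
    rw [e2]; abel
  refine hx ⟨d • x + z, ?_⟩
  calc 2 • x + (d • x + z) = (d + 2) • x + z := by rw [add_nsmul x d 2]; abel
    _ = x := hAx
end

section
/- Let M(E) be the graph monoid of a row-finite directed graph E: the commutative monoid generated by elements a_v for v ∈ E⁰ subject to a_v = Σ_{e ∈ s⁻¹(v)} a_{r(e)} for every vertex v that is not a sink. If H is a hereditary subset of E⁰ (v ≤ w and w ∈ H imply v ∈ H, with ≤ the path-way pre-order), then the submonoid of M(E) generated by {a_v : v ∈ H} is an order-ideal of M(E). -/
/-!
Orient the defining relations of `M(E)` as rewriting steps `v + k ⟶ f v + k` on multisets of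
vertices, where `f v` is the multiset of ranges of the edges leaving `v`. Two steps out of the
same multiset can always be completed to a common multiset, so the congruence they generate is
the join of the rewriting relation (Church–Rosser). If `m₁ + m₂` equals in `M(E)` a multiset `m`
supported in `H`, both rewrite to a common `c`. Rewriting never leaves a hereditary set, so `c`
is supported in `H`; and a rewriting of `m₁ + m₂` splits into rewritings `m₁ ⟶* c₁`,
`m₂ ⟶* c₂` with `c = c₁ + c₂`, which exhibits `[m₁]` and `[m₂]` in the submonoid.
-/

namespace Multiset

variable {V : Type*}

theorem mem_addSubmonoidClosure_image_singleton_iff {H : Set V} {m : Multiset V} :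
    m ∈ AddSubmonoid.closure ((fun v => ({v} : Multiset V)) '' H) ↔ ∀ v ∈ m, v ∈ H := by
  constructor
  · intro hm
    induction hm using AddSubmonoid.closure_induction with
    | mem _ hw =>
      obtain ⟨v, hv, rfl⟩ := hw
      simpa using hv
    | zero => simp
    | add _ _ _ _ ha hb => simpa only [mem_add] using fun v hv => hv.elim (ha v) (hb v)
  · intro hm
    rw [← sum_map_singleton m]
    refine AddSubmonoid.multiset_sum_mem _ _ fun x hx => ?_
    obtain ⟨v, hv, rfl⟩ := mem_map.1 hx
    exact AddSubmonoid.subset_closure ⟨v, hm v hv, rfl⟩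

end Multiset

theorem AddCon.mem_closure_image_mk'_singleton_iff {V : Type*} (c : AddCon (Multiset V))
    {H : Set V} {z : c.Quotient} :
    z ∈ AddSubmonoid.closure ((fun v => c.mk' ({v} : Multiset V)) '' H) ↔
      ∃ m : Multiset V, (∀ v ∈ m, v ∈ H) ∧ c.mk' m = z := by
  rw [← Set.image_image c.mk' (fun v => ({v} : Multiset V)), ← AddMonoidHom.map_mclosure,
    AddSubmonoid.mem_map]
  simp only [Multiset.mem_addSubmonoidClosure_image_singleton_iff]

namespace MultisetRewrite

open Relation

variable {V : Type*} (P : V → Prop) (f : V → Multiset V)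

def Rule (a b : Multiset V) : Prop :=
  ∃ v, P v ∧ a = {v} ∧ b = f v

def Step (a b : Multiset V) : Prop :=
  ∃ v k, P v ∧ a = v ::ₘ k ∧ b = f v + k

variable {P f}

theorem Step.add_right {a b : Multiset V} (h : Step P f a b) (k : Multiset V) :
    Step P f (a + k) (b + k) := by
  obtain ⟨v, m, hv, rfl, rfl⟩ := h
  exact ⟨v, m + k, hv, Multiset.cons_add v m k, add_assoc _ _ _⟩

theorem reflTransGen_step_add {a b c d : Multiset V} (hab : ReflTransGen (Step P f) a b)
    (hcd : ReflTransGen (Step P f) c d) : ReflTransGen (Step P f) (a + c) (b + d) := by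
  have hright : ∀ {a b} k,
      ReflTransGen (Step P f) a b → ReflTransGen (Step P f) (a + k) (b + k) :=
    fun k h => ReflTransGen.lift (· + k) (fun _ _ hs => hs.add_right k) _ _ h
  refine (hright c hab).trans ?_
  simpa only [add_comm b] using hright b hcd

theorem Step.diamond {a b c : Multiset V} (hab : Step P f a b) (hac : Step P f a c) :
    ∃ d, ReflGen (Step P f) b d ∧ ReflTransGen (Step P f) c d := by
  obtain ⟨v, k, hv, rfl, rfl⟩ := hab
  obtain ⟨w, k', hw, he, rfl⟩ := hac
  rcases Multiset.cons_eq_cons.1 he with ⟨rfl, rfl⟩ | ⟨-, m, rfl, rfl⟩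
  · exact ⟨f v + k, .refl, .refl⟩
  · refine ⟨f v + f w + m, .single ⟨w, f v + m, hw, Multiset.add_cons _ _ _, ?_⟩,
      .single ⟨v, f w + m, hv, Multiset.add_cons _ _ _, add_assoc _ _ _⟩⟩
    rw [add_comm (f v), add_assoc]

variable (P f) in
def joinCon : AddCon (Multiset V) where
  r := Join (ReflTransGen (Step P f))
  iseqv := equivalence_join_reflTransGen fun _ _ _ => Step.diamond
  add' := by
    rintro a b c d ⟨x, hax, hbx⟩ ⟨y, hcy, hdy⟩
    exact ⟨x + y, reflTransGen_step_add hax hcy, reflTransGen_step_add hbx hdy⟩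

theorem addConGen_rule_le_joinCon : addConGen (Rule P f) ≤ joinCon P f := by
  refine AddCon.addConGen_le.2 ?_
  rintro a b ⟨v, hv, rfl, rfl⟩
  exact ⟨f v, .single ⟨v, 0, hv, rfl, (add_zero _).symm⟩, .refl⟩

theorem Step.addConGen_rule {a b : Multiset V} (h : Step P f a b) :
    addConGen (Rule P f) a b := by
  obtain ⟨v, k, hv, rfl, rfl⟩ := h
  rw [← Multiset.singleton_add]
  exact AddConGen.Rel.add (AddConGen.Rel.of _ _ ⟨v, hv, rfl, rfl⟩) (AddConGen.Rel.refl k)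

theorem ReflTransGen.addConGen_rule {a b : Multiset V} (h : ReflTransGen (Step P f) a b) :
    addConGen (Rule P f) a b := by
  induction h with
  | refl => exact AddCon.refl _ _
  | tail _ hstep ih => exact AddCon.trans _ ih hstep.addConGen_rule

theorem Step.of_add {a b c : Multiset V} (h : Step P f (a + b) c) :
    (∃ a', Step P f a a' ∧ c = a' + b) ∨ (∃ b', Step P f b b' ∧ c = a + b') := by
  obtain ⟨v, k, hv, he, rfl⟩ := h
  rcases Multiset.mem_add.1 (he ▸ Multiset.mem_cons_self v k) with hva | hvb
  · obtain ⟨a', rfl⟩ := Multiset.exists_cons_of_mem hva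
    rw [Multiset.cons_add, Multiset.cons_inj_right] at he
    exact .inl ⟨f v + a', ⟨v, a', hv, rfl, rfl⟩, by rw [← he, add_assoc]⟩
  · obtain ⟨b', rfl⟩ := Multiset.exists_cons_of_mem hvb
    rw [Multiset.add_cons, Multiset.cons_inj_right] at he
    exact .inr ⟨f v + b', ⟨v, b', hv, rfl, rfl⟩, by rw [← he, add_left_comm]⟩

theorem exists_add_of_reflTransGen_add {a b c : Multiset V}
    (h : ReflTransGen (Step P f) (a + b) c) :
    ∃ c₁ c₂, c = c₁ + c₂ ∧ ReflTransGen (Step P f) a c₁ ∧ ReflTransGen (Step P f) b c₂ := by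
  generalize hm : a + b = m at h
  induction h using ReflTransGen.head_induction_on generalizing a b with
  | refl => exact ⟨a, b, hm.symm, .refl, .refl⟩
  | head hstep _ ih =>
    subst hm
    rcases hstep.of_add with ⟨a', ha, rfl⟩ | ⟨b', hb, rfl⟩
    · obtain ⟨c₁, c₂, rfl, h₁, h₂⟩ := ih rfl
      exact ⟨c₁, c₂, rfl, .head ha h₁, h₂⟩
    · obtain ⟨c₁, c₂, rfl, h₁, h₂⟩ := ih rfl
      exact ⟨c₁, c₂, rfl, h₁, .head hb h₂⟩

section Hereditary

variable {H : Set V}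

theorem Step.forall_mem (hH : ∀ v, P v → v ∈ H → ∀ w ∈ f v, w ∈ H) {a b : Multiset V}
    (h : Step P f a b) (ha : ∀ x ∈ a, x ∈ H) : ∀ x ∈ b, x ∈ H := by
  obtain ⟨v, k, hv, rfl, rfl⟩ := h
  simp only [Multiset.mem_cons, forall_eq_or_imp] at ha
  simpa only [Multiset.mem_add] using fun x hx => hx.elim (hH v hv ha.1 x) (ha.2 x)

theorem ReflTransGen.forall_mem (hH : ∀ v, P v → v ∈ H → ∀ w ∈ f v, w ∈ H)
    {a b : Multiset V} (h : ReflTransGen (Step P f) a b)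
    (ha : ∀ x ∈ a, x ∈ H) : ∀ x ∈ b, x ∈ H := by
  induction h with
  | refl => exact ha
  | tail _ hstep ih => exact hstep.forall_mem hH ih

theorem mem_closure_of_add_mem_closure (hH : ∀ v, P v → v ∈ H → ∀ w ∈ f v, w ∈ H)
    {x y : (addConGen (Rule P f)).Quotient}
    (hxy : x + y ∈ AddSubmonoid.closure
      ((fun v => (addConGen (Rule P f)).mk' ({v} : Multiset V)) '' H)) :
    x ∈ AddSubmonoid.closure ((fun v => (addConGen (Rule P f)).mk' ({v} : Multiset V)) '' H) ∧
      y ∈ AddSubmonoid.closure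
        ((fun v => (addConGen (Rule P f)).mk' ({v} : Multiset V)) '' H) := by
  simp only [AddCon.mem_closure_image_mk'_singleton_iff] at hxy ⊢
  obtain ⟨m₁, rfl⟩ := AddCon.mk'_surjective x
  obtain ⟨m₂, rfl⟩ := AddCon.mk'_surjective y
  obtain ⟨m, hmH, hm⟩ := hxy
  rw [← map_add] at hm
  obtain ⟨c, hmc, hc⟩ := addConGen_rule_le_joinCon ((AddCon.eq _).1 hm)
  obtain ⟨c₁, c₂, rfl, h₁, h₂⟩ := exists_add_of_reflTransGen_add hc
  have hcH := ReflTransGen.forall_mem hH hmc hmH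
  exact ⟨⟨c₁, fun v hv => hcH v (Multiset.mem_add.2 (.inl hv)),
      ((AddCon.eq _).2 (ReflTransGen.addConGen_rule h₁)).symm⟩,
    ⟨c₂, fun v hv => hcH v (Multiset.mem_add.2 (.inr hv)),
      ((AddCon.eq _).2 (ReflTransGen.addConGen_rule h₂)).symm⟩⟩

end Hereditary

end MultisetRewrite

/-- Let `E` be a row-finite directed graph with vertices `V`, edges `E`, source `s`
and range `r`, and let `M(E)` be its graph monoid: the quotient of the free
commutative monoid (multisets) on `V` by the congruence generated by
`a_v = Σ_{e ∈ s⁻¹(v)} a_{r(e)}` for every non-sink vertex `v`.  If `H ⊆ V` is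
hereditary for the path-way pre-order, then the submonoid of `M(E)` generated by
`{a_v : v ∈ H}` is an order-ideal. -/
theorem stmt_17 (V E : Type*) (s r : E → V) [∀ v : V, Fintype {e : E // s e = v}]
    (con : AddCon (Multiset V))
    (hcon : con = addConGen (fun a b => ∃ v : V, Nonempty {e : E // s e = v} ∧
      a = ({v} : Multiset V) ∧
      b = (Finset.univ : Finset {e : E // s e = v}).val.map (fun e => r e.1)))
    (H : Set V)
    (hH : ∀ v w : V,
      Relation.ReflTransGen (fun a b => ∃ e : E, s e = a ∧ r e = b) w v →
      w ∈ H → v ∈ H) :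
    ∀ x y : con.Quotient,
      x + y ∈ AddSubmonoid.closure ((fun v => con.mk' ({v} : Multiset V)) '' H) →
      x ∈ AddSubmonoid.closure ((fun v => con.mk' ({v} : Multiset V)) '' H) ∧
      y ∈ AddSubmonoid.closure ((fun v => con.mk' ({v} : Multiset V)) '' H) := by
  subst hcon
  intro x y
  refine MultisetRewrite.mem_closure_of_add_mem_closure
    (P := fun v => Nonempty {e : E // s e = v})
    (f := fun v => (Finset.univ : Finset {e : E // s e = v}).val.map (fun e => r e.1)) ?_
  intro v _ hv w hw
  obtain ⟨e, -, rfl⟩ := Multiset.mem_map.1 hw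
  exact hH _ v (.single ⟨e.1, e.2, rfl⟩) hv
end
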